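/- (Validity of formulation (Dom).) Let h ∈ {0,1}^J and H = {i : h_i = 1}. There exists z ∈ ℝ₊^{J∪{s,t}} with z_s = 0, z_t ≤ M, and z_j − z_i ≥ L⁰(i,j) + (L^Δ(i,j) − L⁰(i,j)) h_j for all i ≺ j (with h_s = 1, h_t = 0) if and only if H is an anchored set, i.e., there exists a schedule x of G(p) with x_t ≤ M such that H is x-anchored for Δ. -/

import Mathlib

/-- Length of a path (given as a list of vertices) when each arc `(i,j)` has
length `q i` (the duration of its source vertex). -/
def PathLen {V : Type*} (q : V → ℝ) (l : List V) : ℝ := (l.dropLast.map q).sum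

/-- `l` is a path from `i` to `j` in the digraph with arc relation `A`. -/
def IsPath {V : Type*} (A : V → V → Prop) (i j : V) (l : List V) : Prop :=
  l ≠ [] ∧ l.Chain' A ∧ l.head? = some i ∧ l.getLast? = some j

/-- Length of a path for arc-indexed weights `w`. -/
def LenW {V : Type*} (w : V → V → ℝ) : List V → ℝ
  | a :: b :: l => w a b + LenW w (b :: l)
  | _ => 0

/-- `x` is a schedule of the precedence graph `(V, A)` with durations `q` and source `s`. -/
def Sched {V : Type*} (A : V → V → Prop) (s : V) (q x : V → ℝ) : Prop :=
  x s = 0 ∧ (∀ v, 0 ≤ x v) ∧ ∀ i j, A i j → q i ≤ x j - x i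

/-- `H` is `x`-anchored for the uncertainty set `Δ`. -/
def XAnchored {V : Type*} (A : V → V → Prop) (s : V) (p : V → ℝ)
    (Δ : Set (V → ℝ)) (x : V → ℝ) (H : Set V) : Prop :=
  ∀ δ ∈ Δ, ∃ y, Sched A s (fun v => p v + δ v) y ∧ ∀ i ∈ H, y i = x i

/-- `L` is the longest `i`–`j` path length under durations `q`. -/
def IsLongest {V : Type*} (A : V → V → Prop) (q : V → ℝ) (i j : V) (L : ℝ) : Prop :=
  IsGreatest {r | ∃ l, IsPath A i j l ∧ PathLen q l = r} L

/-- `L` is the worst-case longest `i`–`j` path length over the uncertainty set `Δ`. -/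
def IsWorst {V : Type*} (A : V → V → Prop) (p : V → ℝ) (Δ : Set (V → ℝ))
    (i j : V) (L : ℝ) : Prop :=
  IsGreatest {r | ∃ δ ∈ Δ, ∃ l, IsPath A i j l ∧ PathLen (fun v => p v + δ v) l = r} L

/-!
Both directions go through the earliest-start schedule `earliestStart A q (insert s H) r`,
whose value at `v` is the latest arrival at `v` along a path from some `k ∈ H ∪ {s}` released
at time `r k` (finitely many paths, as the graph is acyclic). Given `z`, releasing `H` at `z`
under durations `p + δ` gives a schedule that keeps `H` at `z`, because the worst-case
constraints say that no path into `H` arrives later than `z`. Conversely, for an anchored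
schedule `x`, the earliest `p`-schedule released at `x` on `H` meets the nominal constraints,
and it lies below every `(p + δ)`-schedule that agrees with `x` on `H`, which yields the
worst-case constraints into `H`.
-/

section

variable {V : Type*} {A : V → V → Prop}

lemma pathLen_nonneg {q : V → ℝ} (hq : ∀ v, 0 ≤ q v) (l : List V) : 0 ≤ PathLen q l :=
  List.sum_nonneg fun _ hr => by
    obtain ⟨v, -, rfl⟩ := List.mem_map.mp hr
    exact hq v

lemma pathLen_mono {q q' : V → ℝ} (h : ∀ v, q v ≤ q' v) (l : List V) :
    PathLen q l ≤ PathLen q' l :=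
  List.sum_le_sum fun v _ => h v

@[simp]
lemma pathLen_singleton (q : V → ℝ) (v : V) : PathLen q [v] = 0 := rfl

lemma pathLen_cons_cons (q : V → ℝ) (a b : V) (l : List V) :
    PathLen q (a :: b :: l) = q a + PathLen q (b :: l) := by
  simp [PathLen, List.dropLast_cons_cons]

lemma isPath_singleton (v : V) : IsPath A v v [v] :=
  ⟨List.cons_ne_nil _ _, List.isChain_singleton _, rfl, rfl⟩

lemma isPath_pair {i j : V} (h : A i j) : IsPath A i j [i, j] :=
  ⟨List.cons_ne_nil _ _, List.isChain_pair.mpr h, rfl, rfl⟩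

namespace IsPath

variable {i j k : V} {l : List V}

lemma tail {b : V} (h : IsPath A i j (i :: b :: l)) :
    A i b ∧ IsPath A b j (b :: l) := by
  obtain ⟨-, hc, -, hj⟩ := h
  exact ⟨(List.isChain_cons_cons.mp hc).1, List.cons_ne_nil _ _,
    (List.isChain_cons_cons.mp hc).2, rfl, by simpa using hj⟩

lemma concat (h : IsPath A i j l) (hjk : A j k) :
    IsPath A i k (l ++ [k]) ∧ ∀ q : V → ℝ, PathLen q (l ++ [k]) = PathLen q l + q j := by
  obtain ⟨hne, hc, hi, hj⟩ := h
  obtain ⟨l', rfl⟩ := List.getLast?_eq_some_iff.mp hj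
  refine ⟨⟨by simp, hc.append (List.isChain_singleton k) (by simp_all), ?_, by simp⟩, fun q => ?_⟩
  · rwa [List.head?_append_of_ne_nil _ hne]
  · simp [PathLen]

lemma pairwise_transGen (h : IsPath A i j l) : l.Pairwise (Relation.TransGen A) :=
  (h.2.1.imp fun _ _ => Relation.TransGen.single).pairwise

lemma eq_singleton_or_transGen (h : IsPath A i j l) :
    (i = j ∧ l = [i]) ∨ Relation.TransGen A i j := by
  have hpair := h.pairwise_transGen
  obtain ⟨hne, -, hi, hj⟩ := h
  obtain ⟨l', rfl⟩ := List.head?_eq_some_iff.mp hi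
  by_cases hl' : l' = []
  · simp_all
  · right
    have hjl' : j ∈ l' := by
      rw [List.getLast?_cons, List.getLast?_eq_some_getLast hl'] at hj
      exact (Option.some.inj hj) ▸ List.getLast_mem hl'
    exact List.rel_of_pairwise_cons hpair hjl'

lemma nodup (hacyc : ∀ v, ¬ Relation.TransGen A v v) (h : IsPath A i j l) : l.Nodup :=
  h.pairwise_transGen.imp (S := (· ≠ ·)) fun {a _} hab hEq => by subst hEq; exact hacyc a hab

end IsPath

lemma exists_isPath_of_transGen {i j : V} (h : Relation.TransGen A i j) : ∃ l, IsPath A i j l := by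
  induction h with
  | single h => exact ⟨_, isPath_pair h⟩
  | tail _ h ih =>
    obtain ⟨l, hl⟩ := ih
    exact ⟨_, (hl.concat h).1⟩

namespace Sched

variable {s : V} {q q' y : V → ℝ}

lemma mono (hy : Sched A s q' y) (h : ∀ v, q v ≤ q' v) : Sched A s q y :=
  ⟨hy.1, hy.2.1, fun i j hij => (h i).trans (hy.2.2 i j hij)⟩

lemma add_pathLen_le (hy : Sched A s q y) :
    ∀ {i j : V} {l : List V}, IsPath A i j l → y i + PathLen q l ≤ y j
  | i, j, [a], ⟨_, _, hi, hj⟩ => by simp_all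
  | i, j, a :: b :: l, h => by
    obtain rfl : a = i := by simpa using h.2.2.1
    obtain ⟨hab, htail⟩ := h.tail
    have := hy.add_pathLen_le htail
    rw [pathLen_cons_cons]
    linarith [hy.2.2 a b hab]

end Sched

lemma IsLongest.le_sub_of_sched {s i j : V} {q y : V → ℝ} {L : ℝ} (hL : IsLongest A q i j L)
    (hy : Sched A s q y) : L ≤ y j - y i := by
  obtain ⟨l, hl, rfl⟩ := hL.1
  linarith [hy.add_pathLen_le hl]

lemma IsLongest.le_of_isWorst {p : V → ℝ} {Δ : Set (V → ℝ)} (hΔ : ∀ δ ∈ Δ, ∀ v, 0 ≤ δ v)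
    {i j : V} {L₀ L : ℝ} (h₀ : IsLongest A p i j L₀) (hw : IsWorst A p Δ i j L) : L₀ ≤ L := by
  obtain ⟨δ, hδ, -⟩ := hw.1
  obtain ⟨l, hl, rfl⟩ := h₀.1
  exact (pathLen_mono (fun v => le_add_of_nonneg_right (hΔ δ hδ v)) l).trans
    (hw.2 ⟨δ, hδ, l, hl, rfl⟩)

def arrivalTimes (A : V → V → Prop) (q : V → ℝ) (K : Set V) (r : V → ℝ) (v : V) : Set ℝ :=
  {τ | ∃ k ∈ K, ∃ l, IsPath A k v l ∧ r k + PathLen q l = τ}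

noncomputable def earliestStart (A : V → V → Prop) (q : V → ℝ) (K : Set V) (r : V → ℝ) (v : V) :
    ℝ :=
  sSup (arrivalTimes A q K r v)

section EarliestStart

variable {q r : V → ℝ} {K : Set V}

lemma bddAbove_arrivalTimes [Fintype V] (hacyc : ∀ v, ¬ Relation.TransGen A v v) (v : V) :
    BddAbove (arrivalTimes A q K r v) := by
  have hfin : ((Set.univ : Set V) ×ˢ {l : List V | l.length ≤ Fintype.card V}).Finite :=
    Set.finite_univ.prod (List.finite_length_le V _)
  refine ((hfin.image fun kl => r kl.1 + PathLen q kl.2).subset ?_).bddAbove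
  rintro _ ⟨k, -, l, hl, rfl⟩
  exact ⟨(k, l), ⟨trivial, (hl.nodup hacyc).length_le_card⟩, rfl⟩

lemma le_earliestStart [Fintype V] (hacyc : ∀ v, ¬ Relation.TransGen A v v) {k v : V}
    {l : List V} (hk : k ∈ K) (hl : IsPath A k v l) :
    r k + PathLen q l ≤ earliestStart A q K r v :=
  le_csSup (bddAbove_arrivalTimes hacyc v) ⟨k, hk, l, hl, rfl⟩

lemma earliestStart_le {v : V} {b : ℝ} (hne : (arrivalTimes A q K r v).Nonempty)
    (h : ∀ k ∈ K, ∀ l, IsPath A k v l → r k + PathLen q l ≤ b) : earliestStart A q K r v ≤ b :=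
  csSup_le hne fun _ ⟨k, hk, l, hl, hτ⟩ => hτ ▸ h k hk l hl

lemma earliestStart_add_le [Fintype V] (hacyc : ∀ v, ¬ Relation.TransGen A v v) {i j : V}
    (hij : A i j) (hne : (arrivalTimes A q K r i).Nonempty) :
    earliestStart A q K r i + q i ≤ earliestStart A q K r j := by
  rw [← le_sub_iff_add_le]
  refine earliestStart_le hne fun k hk l hl => ?_
  obtain ⟨hl', hlen⟩ := hl.concat hij
  linarith [le_earliestStart (q := q) (r := r) hacyc hk hl', hlen q]

lemma earliestStart_eq_of_mem [Fintype V] (hacyc : ∀ v, ¬ Relation.TransGen A v v) {v : V}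
    (hv : v ∈ K)
    (h : ∀ k ∈ K, Relation.TransGen A k v → ∀ l, IsPath A k v l → r k + PathLen q l ≤ r v) :
    earliestStart A q K r v = r v := by
  refine le_antisymm (earliestStart_le ⟨_, v, hv, _, isPath_singleton v, rfl⟩ fun k hk l hl => ?_)
    (by simpa using le_earliestStart (q := q) (r := r) hacyc hv (isPath_singleton (A := A) v))
  rcases hl.eq_singleton_or_transGen with ⟨rfl, rfl⟩ | hkv
  · simp
  · exact h k hk hkv l hl

lemma earliestStart_le_of_sched {s : V} {y : V → ℝ} (hy : Sched A s q y)
    (hK : ∀ k ∈ K, r k ≤ y k) (v : V) : earliestStart A q K r v ≤ y v :=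
  Real.sSup_le (fun _ ⟨k, hk, l, hl, hτ⟩ => hτ ▸ by linarith [hK k hk, hy.add_pathLen_le hl])
    (hy.2.1 v)

lemma sched_earliestStart [Fintype V] {s : V} (hacyc : ∀ v, ¬ Relation.TransGen A v v)
    (hsrc : ∀ v, v ≠ s → Relation.TransGen A s v) (hq : ∀ v, 0 ≤ q v) (hs : s ∈ K)
    (hrs : r s = 0) : Sched A s q (earliestStart A q K r) := by
  have hpath : ∀ v, ∃ l, IsPath A s v l := fun v => by
    rcases eq_or_ne v s with rfl | hv
    exacts [⟨_, isPath_singleton v⟩, exists_isPath_of_transGen (hsrc v hv)]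
  have hne : ∀ v, (arrivalTimes A q K r v).Nonempty := fun v =>
    let ⟨l, hl⟩ := hpath v
    ⟨_, s, hs, l, hl, rfl⟩
  have hnot_to_src : ∀ k, ¬ Relation.TransGen A k s := fun k hks => by
    rcases eq_or_ne k s with rfl | hk
    exacts [hacyc k hks, hacyc s ((hsrc k hk).trans hks)]
  refine ⟨?_, fun v => ?_, fun i j hij => ?_⟩
  · rw [earliestStart_eq_of_mem hacyc hs fun k _ hks => (hnot_to_src k hks).elim, hrs]
  · obtain ⟨l, hl⟩ := hpath v
    linarith [le_earliestStart (q := q) (r := r) hacyc hs hl, pathLen_nonneg hq l]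
  · rw [le_sub_iff_add_le, add_comm]
    exact earliestStart_add_le hacyc hij (hne i)

end EarliestStart

lemma add_sub_mul_indicator_one (a b : ℝ) (H : Set V) (j : V) [Decidable (j ∈ H)] :
    a + (b - a) * H.indicator 1 j = if j ∈ H then b else a := by
  by_cases hj : j ∈ H <;> simp [hj]

lemma xAnchored_of_isWorst_le_sub [Fintype V] {s : V} {p z : V → ℝ} {Δ : Set (V → ℝ)}
    {LΔ : V → V → ℝ} {H : Set V} (hacyc : ∀ v, ¬ Relation.TransGen A v v)
    (hsrc : ∀ v, v ≠ s → Relation.TransGen A s v) (hp : ∀ v, 0 ≤ p v)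
    (hΔ : ∀ δ ∈ Δ, ∀ v, 0 ≤ δ v)
    (hLΔ : ∀ i j, Relation.TransGen A i j → IsWorst A p Δ i j (LΔ i j))
    (hzs : z s = 0) (hz : ∀ i j, Relation.TransGen A i j → j ∈ H → LΔ i j ≤ z j - z i) :
    XAnchored A s p Δ z H := fun δ hδ =>
  ⟨earliestStart A (fun v => p v + δ v) (insert s H) z,
    sched_earliestStart hacyc hsrc (fun v => add_nonneg (hp v) (hΔ δ hδ v)) (Set.mem_insert s H)
      hzs,
    fun v hv => earliestStart_eq_of_mem hacyc (Set.mem_insert_of_mem s hv) fun k _ hkv l hl => by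
      linarith [(hLΔ k v hkv).2 ⟨δ, hδ, l, hl, rfl⟩, hz k v hkv hv]⟩

lemma XAnchored.isWorst_le_sub {s : V} {p x : V → ℝ} {Δ : Set (V → ℝ)} {H : Set V}
    (hanc : XAnchored A s p Δ x H) (hx : Sched A s p x) (hΔ : ∀ δ ∈ Δ, ∀ v, 0 ≤ δ v)
    {i j : V} {L : ℝ} (hw : IsWorst A p Δ i j L) (hj : j ∈ H) :
    L ≤ x j - earliestStart A p (insert s H) x i := by
  obtain ⟨δ, hδ, l, hl, rfl⟩ := hw.1
  obtain ⟨y, hy, hyx⟩ := hanc δ hδ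
  have hzy : earliestStart A p (insert s H) x i ≤ y i := by
    refine earliestStart_le_of_sched (hy.mono fun v => le_add_of_nonneg_right (hΔ δ hδ v)) ?_ i
    rintro k (rfl | hk)
    · rw [hx.1, hy.1]
    · rw [hyx k hk]
  linarith [hy.add_pathLen_le hl, hyx j hj]

end

theorem dom_formulation_valid_general
    {V : Type*} [Fintype V] (A : V → V → Prop) (s t : V)
    (p : V → ℝ) (hp : ∀ v, 0 ≤ p v)
    (hacyc : ∀ v, ¬ Relation.TransGen A v v)
    (hsrc : ∀ v, v ≠ s → Relation.TransGen A s v)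
    (Δ : Set (V → ℝ)) (hΔnonneg : ∀ δ ∈ Δ, ∀ v, 0 ≤ δ v)
    (L0 LΔ : V → V → ℝ)
    (hL0 : ∀ i j, Relation.TransGen A i j → IsLongest A p i j (L0 i j))
    (hLΔ : ∀ i j, Relation.TransGen A i j → IsWorst A p Δ i j (LΔ i j))
    (H : Set V) (M : ℝ) :
    (∃ z : V → ℝ, z s = 0 ∧ (∀ v, 0 ≤ z v) ∧ z t ≤ M ∧
        ∀ i j, Relation.TransGen A i j →
          L0 i j + (LΔ i j - L0 i j) * H.indicator 1 j ≤ z j - z i) ↔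
      (∃ x, Sched A s p x ∧ x t ≤ M ∧ XAnchored A s p Δ x H) := by
  classical
  simp_rw [add_sub_mul_indicator_one]
  constructor
  · rintro ⟨z, hzs, hz0, hzt, hz⟩
    refine ⟨z, ⟨hzs, hz0, fun i j hij => ?_⟩, hzt, xAnchored_of_isWorst_le_sub hacyc hsrc hp
      hΔnonneg hLΔ hzs fun i j hij hj => by simpa [hj] using hz i j hij⟩
    have hL0 := hL0 i j (.single hij)
    have hL0LΔ := hL0.le_of_isWorst hΔnonneg (hLΔ i j (.single hij))
    have hpL0 : p i ≤ L0 i j := hL0.2 ⟨[i, j], isPath_pair hij, by simp [pathLen_cons_cons]⟩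
    have := hz i j (.single hij)
    split_ifs at this <;> linarith
  · rintro ⟨x, hx, hxt, hanc⟩
    have hz : Sched A s p (earliestStart A p (insert s H) x) :=
      sched_earliestStart hacyc hsrc hp (Set.mem_insert s H) hx.1
    refine ⟨_, hz.1, hz.2.1, (earliestStart_le_of_sched hx (fun _ _ => le_rfl) t).trans hxt,
      fun i j hij => ?_⟩
    split_ifs with hj
    · rw [earliestStart_eq_of_mem hacyc (Set.mem_insert_of_mem s hj) fun k _ _ l hl =>
        hx.add_pathLen_le hl]
      exact hanc.isWorst_le_sub hx hΔnonneg (hLΔ i j hij) hj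
    · exact (hL0 i j hij).le_sub_of_sched hz

/-- validity of formulation (Dom): there is `z ≥ 0` with `z s = 0`,
`z t ≤ M` and `z_j - z_i ≥ L⁰(i,j) + (L^Δ(i,j) - L⁰(i,j))·[j ∈ H]` for all `i ≺ j`
iff `H` is an anchored set. -/
theorem dom_formulation_valid
    {V : Type*} [Fintype V] (A : V → V → Prop) (s t : V)
    (p : V → ℝ) (hp : ∀ v, 0 ≤ p v) (hps : p s = 0)
    (hacyc : ∀ v, ¬ Relation.TransGen A v v)
    (hsrc : ∀ v, v ≠ s → Relation.TransGen A s v)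
    (hsink : ∀ v, v ≠ t → Relation.TransGen A v t)
    (Δ : Set (V → ℝ)) (hΔne : Δ.Nonempty) (hΔnonneg : ∀ δ ∈ Δ, ∀ v, 0 ≤ δ v)
    (hΔst : ∀ δ ∈ Δ, δ s = 0 ∧ δ t = 0)
    (L0 LΔ : V → V → ℝ)
    (hL0 : ∀ i j, Relation.TransGen A i j → IsLongest A p i j (L0 i j))
    (hLΔ : ∀ i j, Relation.TransGen A i j → IsWorst A p Δ i j (LΔ i j))
    (H : Set V) (hHs : s ∉ H) (hHt : t ∉ H) (M : ℝ) :
    (∃ z : V → ℝ, z s = 0 ∧ (∀ v, 0 ≤ z v) ∧ z t ≤ M ∧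
        ∀ i j, Relation.TransGen A i j →
          L0 i j + (LΔ i j - L0 i j) * H.indicator 1 j ≤ z j - z i) ↔
      (∃ x, Sched A s p x ∧ x t ≤ M ∧ XAnchored A s p Δ x H) :=
  dom_formulation_valid_general A s t p hp hacyc hsrc Δ hΔnonneg L0 LΔ hL0 hLΔ H M
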